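/- Let (𝔤, •) be a finite-dimensional left symmetric algebra and r a symmetric element of 𝔤 ⊗ 𝔤. Define R on Φ(𝔤)* × Φ(𝔤)* by R((α₁,β₁),(α₂,β₂)) = r(α₁,β₂) − r(α₂,β₁), so that R_#(α,β) = (−r_#(β), r_#(α)). Then [[r,r]] = 0 if and only if [R,R] = 0, where [[r,r]](α,β,γ) = ⟨γ, r_#([α,β]_r) − [r_#(α), r_#(β)]⟩ and [R,R](a,b,c) = Σ_cyclic ⟨c, [R_#(a), R_#(b)]⟩ with the Lie bracket on Φ(𝔤) = 𝔤 × 𝔤 given by [(a,b),(c,d)] = ([a,c], a•d − c•b). -/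
import Mathlib


open Module

/-- The action `L*_u` on `𝔤*`, `⟨L*_u α, v⟩ = −⟨α, u•v⟩`. -/
def lStar {G : Type*} [AddCommGroup G] [Module ℝ G]
    (mul : G →ₗ[ℝ] G →ₗ[ℝ] G) (u : G) (α : Dual ℝ G) : Dual ℝ G :=
  -(α.comp (mul u))

/-- The bracket `[(a,b),(c,d)] = ([a,c], a•d − c•b)` on `Φ(𝔤) = 𝔤 × 𝔤`. -/
def phiBracket {G : Type*} [AddCommGroup G] [Module ℝ G]
    (mul : G →ₗ[ℝ] G →ₗ[ℝ] G) (p q : G × G) : G × G :=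
  (mul p.1 q.1 - mul q.1 p.1, mul p.1 q.2 - mul q.1 p.2)

/-- The pairing between `Φ(𝔤)* = 𝔤* × 𝔤*` and `Φ(𝔤) = 𝔤 × 𝔤`. -/
def phiPair {G : Type*} [AddCommGroup G] [Module ℝ G]
    (c : Dual ℝ G × Dual ℝ G) (x : G × G) : ℝ :=
  c.1 x.1 + c.2 x.2

/-- `R_#(α,β) = (−r_#(β), r_#(α))`. -/
def bigRSharp {G : Type*} [AddCommGroup G] [Module ℝ G]
    (rsharp : Dual ℝ G →ₗ[ℝ] G) (a : Dual ℝ G × Dual ℝ G) : G × G :=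
  (-(rsharp a.2), rsharp a.1)

/-- For a finite-dimensional left symmetric algebra `(𝔤,•)` and symmetric
`r ∈ 𝔤⊗𝔤`, one has `[[r,r]] = 0` iff `[R,R] = 0` on `Φ(𝔤) = 𝔤 × 𝔤`. -/
theorem stmt_8 {G : Type*} [AddCommGroup G] [Module ℝ G] [FiniteDimensional ℝ G]
    (mul : G →ₗ[ℝ] G →ₗ[ℝ] G)
    (hls : ∀ u v w : G,
      mul (mul u v) w - mul u (mul v w) = mul (mul v u) w - mul v (mul u w))
    (rsharp : Dual ℝ G →ₗ[ℝ] G)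
    (hrsymm : ∀ α β : Dual ℝ G, α (rsharp β) = β (rsharp α)) :
    (∀ α β γ : Dual ℝ G,
        γ (rsharp (lStar mul (rsharp α) β - lStar mul (rsharp β) α)
            - (mul (rsharp α) (rsharp β) - mul (rsharp β) (rsharp α))) = 0)
      ↔ (∀ a b c : Dual ℝ G × Dual ℝ G,
          phiPair c (phiBracket mul (bigRSharp rsharp a) (bigRSharp rsharp b))
            + phiPair a (phiBracket mul (bigRSharp rsharp b) (bigRSharp rsharp c))
            + phiPair b (phiBracket mul (bigRSharp rsharp c) (bigRSharp rsharp a))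
            = 0) := by
  set A := rsharp
  -- expanded form of the LHS expression
  have hF : ∀ α β γ : Dual ℝ G,
      γ (A (lStar mul (A α) β - lStar mul (A β) α)
          - (mul (A α) (A β) - mul (A β) (A α)))
        = -(β (mul (A α) (A γ))) + α (mul (A β) (A γ))
            - γ (mul (A α) (A β)) + γ (mul (A β) (A α)) := by
    intro α β γ
    have h1 : γ (A (lStar mul (A α) β)) = -(β (mul (A α) (A γ))) := by
      rw [hrsymm γ]; simp [lStar]
    have h2 : γ (A (lStar mul (A β) α)) = -(α (mul (A β) (A γ))) := by
      rw [hrsymm γ]; simp [lStar]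
    simp only [map_sub, h1, h2]
    ring
  -- key identity relating the cyclic sum to the LHS expression
  have hkey : ∀ a b c : Dual ℝ G × Dual ℝ G,
      phiPair c (phiBracket mul (bigRSharp A a) (bigRSharp A b))
        + phiPair a (phiBracket mul (bigRSharp A b) (bigRSharp A c))
        + phiPair b (phiBracket mul (bigRSharp A c) (bigRSharp A a))
      = -(c.1 (A (lStar mul (A a.2) b.2 - lStar mul (A b.2) a.2)
              - (mul (A a.2) (A b.2) - mul (A b.2) (A a.2)))
            + a.1 (A (lStar mul (A b.2) c.2 - lStar mul (A c.2) b.2)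
              - (mul (A b.2) (A c.2) - mul (A c.2) (A b.2)))
            + b.1 (A (lStar mul (A c.2) a.2 - lStar mul (A a.2) c.2)
              - (mul (A c.2) (A a.2) - mul (A a.2) (A c.2)))) := by
    intro a b c
    rw [hF a.2 b.2 c.1, hF b.2 c.2 a.1, hF c.2 a.2 b.1]
    simp only [phiPair, phiBracket, bigRSharp, map_sub, map_neg, LinearMap.sub_apply,
      LinearMap.neg_apply, LinearMap.map_neg]
    ring
  constructor
  · intro h a b c
    rw [hkey]
    rw [h a.2 b.2 c.1, h b.2 c.2 a.1, h c.2 a.2 b.1]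
    ring
  · intro h α β γ
    have := hkey (γ, 0) (0, α) (0, β)
    rw [h (γ, 0) (0, α) (0, β)] at this
    simp only [LinearMap.zero_apply, map_zero] at this
    linarith [this]
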